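/- Define p₀^k(t) = d(k,t) + d(k-1,t) and p₁^k(t) = p₀^k(0)·(d(k,t) + d(k-1,t)) + (p₀^k(0) - 1)·d(k-2,t), where c and d satisfy the standard recursion from the paper. Then for all k ≥ 4 and all t ≥ 1: d(k,t) + d(k-1,t) - p₀^k(0)·c(k+1,t) = -p₁^k(t-1). -/
import Mathlib


mutual
  /-- The function `c_k(t)` from Section 4 of the paper:
  `c(2,0) = 1`, `c(2,t) = 0` for `t ≠ 0`, and `c(k,t) = d(k-1,t-1) + c(k-1,t)`
  for `k ≥ 3` (with value `0` for `k < 2`). -/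
  def cFun : ℕ → ℤ → ℤ
    | 0, _ => 0
    | 1, _ => 0
    | 2, t => if t = 0 then 1 else 0
    | (k + 3), t => dFun (k + 2) (t - 1) + cFun (k + 2) t

  /-- The function `d_k(t)` from Section 4 of the paper:
  `d(2,0) = 1`, `d(2,t) = 0` for `t ≠ 0`, and `d(k,t) = c(k-1,t)` for `k ≥ 3`
  (with value `0` for `k < 2`). -/
  def dFun : ℕ → ℤ → ℤ
    | 0, _ => 0
    | 1, _ => 0
    | 2, t => if t = 0 then 1 else 0
    | (k + 3), t => cFun (k + 2) t
end

/-- The polynomial `p₀^k(t) = d(k,t) + d(k-1,t)` from Section 4. -/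
def p0 (k : ℕ) (t : ℤ) : ℤ := dFun k t + dFun (k - 1) t

/-- The polynomial
`p₁^k(t) = p₀^k(0)·(d(k,t) + d(k-1,t)) + (p₀^k(0) - 1)·d(k-2,t)`
from Section 4 (here `a_{0,1} = 1`). -/
def p1 (k : ℕ) (t : ℤ) : ℤ :=
  p0 k 0 * (dFun k t + dFun (k - 1) t) + (p0 k 0 - 1) * dFun (k - 2) t

lemma cd_neg : ∀ n : ℕ, ∀ t : ℤ, t < 0 → cFun n t = 0 ∧ dFun n t = 0 := by
  intro n
  induction n with
  | zero => intro t ht; simp [cFun, dFun]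
  | succ m ih =>
    intro t ht
    rcases m with _ | _ | m'
    · simp [cFun, dFun]
    · constructor <;> simp [cFun, dFun] <;> omega
    ·
      have h1 : cFun (m' + 2) (t - 1) = 0 ∧ dFun (m' + 2) (t - 1) = 0 := ih (t - 1) (by omega)
      have h2 : cFun (m' + 2) t = 0 ∧ dFun (m' + 2) t = 0 := ih t ht
      constructor
      · show cFun (m' + 3) t = 0
        rw [cFun]
        omega
      · show dFun (m' + 3) t = 0
        rw [dFun]
        omega

lemma c_zero : ∀ n : ℕ, cFun (n + 2) 0 = 1 := by
  intro n
  induction n with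
  | zero => simp [cFun]
  | succ m ih =>
    show cFun (m + 3) 0 = 1
    rw [cFun]
    have := (cd_neg (m + 2) (0 - 1) (by omega)).2
    omega

/-- Base case `n = 0` of the proof of Proposition 4.4: for `k ≥ 4` and
`t ≥ 1`, `d(k,t) + d(k-1,t) - p₀^k(0)·c(k+1,t) = -p₁^k(t-1)`. -/
theorem p1_identity (k : ℕ) (hk : 4 ≤ k) (t : ℤ) (ht : 1 ≤ t) :
    dFun k t + dFun (k - 1) t - p0 k 0 * cFun (k + 1) t = -(p1 k (t - 1)) := by
  obtain ⟨m, rfl⟩ : ∃ m, k = m + 4 := ⟨k - 4, by omega⟩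
  have hp0 : p0 (m + 4) 0 = 2 := by
    show dFun (m + 4) 0 + dFun (m + 4 - 1) 0 = 2
    have h1 : m + 4 - 1 = m + 1 + 2 := by omega
    rw [h1]
    show dFun (m + 1 + 3) 0 + dFun (m + 3) 0 = 2
    rw [dFun, dFun]
    have := c_zero (m + 1)
    have := c_zero m
    omega
  have e1 : m + 4 - 1 = m + 3 := by omega
  have e2 : m + 4 - 2 = m + 2 := by omega
  rw [p1, hp0, e1, e2]
  show dFun (m + 1 + 3) t + dFun (m + 3) t - 2 * cFun (m + 2 + 3) t =
    -(2 * (dFun (m + 1 + 3) (t - 1) + dFun (m + 3) (t - 1)) + (2 - 1) * dFun (m + 2) (t - 1))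
  have d4 : ∀ s : ℤ, dFun (m + 4) s = cFun (m + 3) s := fun s => by
    show dFun (m + 1 + 3) s = _; rw [dFun]
  have d3 : ∀ s : ℤ, dFun (m + 3) s = cFun (m + 2) s := fun s => by rw [dFun]
  have c5 : ∀ s : ℤ, cFun (m + 5) s = dFun (m + 4) (s - 1) + cFun (m + 4) s := fun s => by
    show cFun (m + 2 + 3) s = _; rw [cFun]
  have c4 : ∀ s : ℤ, cFun (m + 4) s = dFun (m + 3) (s - 1) + cFun (m + 3) s := fun s => by
    show cFun (m + 1 + 3) s = _; rw [cFun]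
  have c3 : ∀ s : ℤ, cFun (m + 3) s = dFun (m + 2) (s - 1) + cFun (m + 2) s := fun s => by
    rw [cFun]
  show dFun (m + 4) t + dFun (m + 3) t - 2 * cFun (m + 4 + 1) t =
    -(2 * (dFun (m + 4) (t - 1) + dFun (m + 3) (t - 1)) + (2 - 1) * dFun (m + 2) (t - 1))
  rw [show m + 4 + 1 = m + 5 from rfl, c5, c4, d4, d3, c3]
  ring
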